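/- arXiv:0705.3159 — 4 statements merged into one kernel-verified Lean document; each statement's English description precedes it below -/
import Mathlib

section
/- Define n(X,T) = 11 + cos(4√2 T/3) + 8 cosh(2X/3) + 4 cos(2√2 T/3)(2 cosh(2X/3) + cosh(4X/3)) and d(X,T) = 4(2 + 3cos(2√2 T/3)) cosh(X/3) + (9 + cos(4√2 T/3)) cosh(X) + 2 cosh(5X/3). Then the function U determined by cos(U) = 1 - 2 n(X,T)²/d(X,T)² (together with the corresponding sine) satisfies the sine-Gordon equation U_TT - U_XX + sin(U) = 0; equivalently, there exists a smooth U with cos U = C := 1 - 2n²/d² solving this PDE. -/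
open Real

noncomputable def sgN (X T : ℝ) : ℝ :=
  11 + Real.cos (4 * Real.sqrt 2 / 3 * T) + 8 * Real.cosh (2 / 3 * X)
    + 4 * Real.cos (2 * Real.sqrt 2 / 3 * T) *
        (2 * Real.cosh (2 / 3 * X) + Real.cosh (4 / 3 * X))

noncomputable def sgD (X T : ℝ) : ℝ :=
  4 * (2 + 3 * Real.cos (2 * Real.sqrt 2 / 3 * T)) * Real.cosh (1 / 3 * X)
    + (9 + Real.cos (4 * Real.sqrt 2 / 3 * T)) * Real.cosh X
    + 2 * Real.cosh (5 / 3 * X)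

/-! ### Auxiliary definitions: Hirota-type representation -/

noncomputable def sgF (X T : ℝ) : ℝ :=
  1 + 2 * Real.exp (X/3) ^ 2 + Real.exp (X/3) ^ 4 * Real.cos (2 * Real.sqrt 2 / 3 * T)

noncomputable def sgG (X T : ℝ) : ℝ :=
  Real.exp (X/3) ^ 5 + 2 * Real.exp (X/3) ^ 3 + Real.exp (X/3) * Real.cos (2 * Real.sqrt 2 / 3 * T)

noncomputable def sgU (X T : ℝ) : ℝ :=
  8 * Real.arctan (sgG X T / (sgF X T + Real.sqrt (sgF X T ^ 2 + sgG X T ^ 2)))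

lemma sgG_pos_of_nonpos (X T : ℝ) (h : sgF X T ≤ 0) : 0 < sgG X T := by
  have hq : 0 < Real.exp (X/3) := Real.exp_pos _
  have hc : -1 ≤ Real.cos (2 * Real.sqrt 2 / 3 * T) := neg_one_le_cos _
  simp only [sgF] at h
  simp only [sgG]
  nlinarith [pow_pos hq 4, pow_pos hq 2, pow_pos hq 1, pow_pos hq 3, pow_pos hq 5,
    mul_nonneg (pow_pos hq 4).le (by linarith : (0:ℝ) ≤ Real.cos (2 * Real.sqrt 2 / 3 * T) + 1),
    mul_nonneg (pow_pos hq 1).le (by linarith : (0:ℝ) ≤ Real.cos (2 * Real.sqrt 2 / 3 * T) + 1)]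

lemma sgDen_pos (X T : ℝ) : 0 < sgF X T ^ 2 + sgG X T ^ 2 := by
  rcases le_or_gt (sgF X T) 0 with h | h
  · exact add_pos_of_nonneg_of_pos (sq_nonneg _) (pow_pos (sgG_pos_of_nonpos X T h) 2)
  · exact add_pos_of_pos_of_nonneg (pow_pos h 2) (sq_nonneg _)

lemma sgFR_pos (X T : ℝ) : 0 < sgF X T + Real.sqrt (sgF X T ^ 2 + sgG X T ^ 2) := by
  rcases le_or_gt (sgF X T) 0 with h | h
  · have hG := sgG_pos_of_nonpos X T h
    have h1 : Real.sqrt (sgF X T ^ 2) < Real.sqrt (sgF X T ^ 2 + sgG X T ^ 2) :=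
      Real.sqrt_lt_sqrt (sq_nonneg _) (by nlinarith)
    rw [Real.sqrt_sq_eq_abs] at h1
    have h2 : -|sgF X T| ≤ sgF X T := neg_abs_le _
    linarith
  · have := Real.sqrt_nonneg (sgF X T ^ 2 + sgG X T ^ 2)
    linarith

/-! ### The product identities relating `sgF, sgG` with `sgN, sgD` -/

lemma sgD_identity (X T : ℝ) :
    Real.exp (X/3) ^ 5 * sgD X T = sgF X T ^ 2 + sgG X T ^ 2 := by
  have hq : Real.exp (X/3) ≠ 0 := (Real.exp_pos _).ne'
  have hc2 : Real.cos (4 * Real.sqrt 2 / 3 * T)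
      = 2 * Real.cos (2 * Real.sqrt 2 / 3 * T) ^ 2 - 1 := by
    rw [show 4 * Real.sqrt 2 / 3 * T = 2 * (2 * Real.sqrt 2 / 3 * T) by ring, Real.cos_two_mul]
  have e1 : Real.exp (1/3 * X) = Real.exp (X/3) := by rw [show (1:ℝ)/3 * X = X/3 by ring]
  have e3 : Real.exp X = Real.exp (X/3) ^ 3 := by
    rw [show X = X/3 + (X/3 + X/3) by ring, Real.exp_add, Real.exp_add]; ring
  have e5 : Real.exp (5/3 * X) = Real.exp (X/3) ^ 5 := by
    rw [show (5:ℝ)/3 * X = X/3 + (X/3 + (X/3 + (X/3 + X/3))) by ring,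
      Real.exp_add, Real.exp_add, Real.exp_add, Real.exp_add]; ring
  simp only [sgD, sgF, sgG, Real.cosh_eq, hc2, e1, e3, e5, Real.exp_neg]
  field_simp
  ring

lemma sgN_identity (X T : ℝ) :
    Real.exp (X/3) ^ 5 * sgN X T = 2 * sgF X T * sgG X T := by
  have hq : Real.exp (X/3) ≠ 0 := (Real.exp_pos _).ne'
  have hc2 : Real.cos (4 * Real.sqrt 2 / 3 * T)
      = 2 * Real.cos (2 * Real.sqrt 2 / 3 * T) ^ 2 - 1 := by
    rw [show 4 * Real.sqrt 2 / 3 * T = 2 * (2 * Real.sqrt 2 / 3 * T) by ring, Real.cos_two_mul]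
  have e2 : Real.exp (2/3 * X) = Real.exp (X/3) ^ 2 := by
    rw [show (2:ℝ)/3 * X = X/3 + X/3 by ring, Real.exp_add]; ring
  have e4 : Real.exp (4/3 * X) = Real.exp (X/3) ^ 4 := by
    rw [show (4:ℝ)/3 * X = X/3 + (X/3 + (X/3 + X/3)) by ring,
      Real.exp_add, Real.exp_add, Real.exp_add]; ring
  simp only [sgN, sgF, sgG, Real.cosh_eq, hc2, e2, e4, Real.exp_neg]
  field_simp
  ring

lemma sgD_pos (X T : ℝ) : 0 < sgD X T := by
  have h := sgD_identity X T
  have hq : 0 < Real.exp (X/3) ^ 5 := pow_pos (Real.exp_pos _) 5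
  nlinarith [sgDen_pos X T]

/-! ### cos and sin of `8 * arctan (g / (f + sqrt (f² + g²)))` -/

lemma cos_sin_8arctan (f g : ℝ) (hD : 0 < f ^ 2 + g ^ 2)
    (hfr : 0 < f + Real.sqrt (f ^ 2 + g ^ 2)) :
    Real.cos (8 * Real.arctan (g / (f + Real.sqrt (f ^ 2 + g ^ 2))))
        = 1 - 8 * f ^ 2 * g ^ 2 / (f ^ 2 + g ^ 2) ^ 2 ∧
      Real.sin (8 * Real.arctan (g / (f + Real.sqrt (f ^ 2 + g ^ 2))))
        = 4 * f * g * (f ^ 2 - g ^ 2) / (f ^ 2 + g ^ 2) ^ 2 := by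
  set R := Real.sqrt (f ^ 2 + g ^ 2) with hRdef
  have hR2 : R ^ 2 = f ^ 2 + g ^ 2 := Real.sq_sqrt hD.le
  have hRpos : 0 < R := Real.sqrt_pos.mpr hD
  set t := g / (f + R) with htdef
  have h1t : (0:ℝ) < 1 + t ^ 2 := by positivity
  have hcos2 : Real.cos (2 * Real.arctan t) = f / R := by
    rw [Real.cos_two_mul, Real.cos_arctan, div_pow, one_pow, Real.sq_sqrt h1t.le, htdef]
    field_simp
    linear_combination (R + f) * hR2
  have hsin2 : Real.sin (2 * Real.arctan t) = g / R := by
    have hss : Real.sqrt (1 + t ^ 2) * Real.sqrt (1 + t ^ 2) = 1 + t ^ 2 :=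
      Real.mul_self_sqrt h1t.le
    rw [Real.sin_two_mul, Real.sin_arctan, Real.cos_arctan, htdef]
    field_simp
    rw [Real.sq_sqrt (by positivity)]
    field_simp
    linear_combination g * hR2
  have hcos4 : Real.cos (2 * (2 * Real.arctan t)) = 2 * (f / R) ^ 2 - 1 := by
    rw [Real.cos_two_mul, hcos2]
  have hsin4 : Real.sin (2 * (2 * Real.arctan t)) = 2 * (g / R) * (f / R) := by
    rw [Real.sin_two_mul, hsin2, hcos2]
  constructor
  · rw [show (8:ℝ) * Real.arctan t = 2 * (2 * (2 * Real.arctan t)) by ring,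
      Real.cos_two_mul, hcos4]
    field_simp
    linear_combination (8*f^2*g^2*R^2 - 8*f^2*(f^2+g^2)^2 + 8*f^2*g^2*(f^2+g^2)) * hR2
  · rw [show (8:ℝ) * Real.arctan t = 2 * (2 * (2 * Real.arctan t)) by ring,
      Real.sin_two_mul, hsin4, hcos4]
    field_simp
    linear_combination (4*f*g*(-(f^2-g^2)*R^2 - (f^2+g^2)^2 - (f^2-g^2)*(f^2+g^2))) * hR2

/-! ### Derivative machinery -/

lemma hasDerivAt_angle (F G : ℝ → ℝ) (x f' g' : ℝ)
    (hf : HasDerivAt F f' x) (hg : HasDerivAt G g' x)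
    (hD : 0 < F x ^ 2 + G x ^ 2)
    (hfr : 0 < F x + Real.sqrt (F x ^ 2 + G x ^ 2)) :
    HasDerivAt (fun y => 8 * Real.arctan (G y / (F y + Real.sqrt (F y ^ 2 + G y ^ 2))))
      (4 * (F x * g' - G x * f') / (F x ^ 2 + G x ^ 2)) x := by
  have hR2 : Real.sqrt (F x ^ 2 + G x ^ 2) ^ 2 = F x ^ 2 + G x ^ 2 := Real.sq_sqrt hD.le
  have hRpos : 0 < Real.sqrt (F x ^ 2 + G x ^ 2) := Real.sqrt_pos.mpr hD
  have hsum : HasDerivAt (fun y => F y ^ 2 + G y ^ 2)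
      ((2:ℕ) * F x ^ (2-1) * f' + (2:ℕ) * G x ^ (2-1) * g') x := (hf.pow 2).add (hg.pow 2)
  have hRd := hsum.sqrt hD.ne'
  have hden := hf.add hRd
  have ht := hg.div hden hfr.ne'
  have hU := ht.arctan.const_mul (8:ℝ)
  refine hU.congr_deriv (Eq.symm ?_)
  simp only [Pi.add_apply, Pi.div_apply]
  field_simp
  linear_combination ((-8)*G x*Real.sqrt (F x ^ 2 + G x ^ 2)*f' + (-16)*G x^2*g' + (8)*F x*Real.sqrt (F x ^ 2 + G x ^ 2)*g' + (-16)*F x*G x*f') * hR2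

/-! ### Explicit partial derivatives -/

noncomputable def sgFT (X T : ℝ) : ℝ :=
  -(2 * Real.sqrt 2 / 3) * Real.sin (2 * Real.sqrt 2 / 3 * T) * Real.exp (X/3) ^ 4
noncomputable def sgGT (X T : ℝ) : ℝ :=
  -(2 * Real.sqrt 2 / 3) * Real.sin (2 * Real.sqrt 2 / 3 * T) * Real.exp (X/3)
noncomputable def sgFX (X T : ℝ) : ℝ :=
  4/3 * Real.exp (X/3) ^ 2 + 4/3 * Real.exp (X/3) ^ 4 * Real.cos (2 * Real.sqrt 2 / 3 * T)
noncomputable def sgGX (X T : ℝ) : ℝ :=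
  5/3 * Real.exp (X/3) ^ 5 + 2 * Real.exp (X/3) ^ 3
    + 1/3 * Real.exp (X/3) * Real.cos (2 * Real.sqrt 2 / 3 * T)
noncomputable def sgFTT (X T : ℝ) : ℝ :=
  -(8/9) * Real.cos (2 * Real.sqrt 2 / 3 * T) * Real.exp (X/3) ^ 4
noncomputable def sgGTT (X T : ℝ) : ℝ :=
  -(8/9) * Real.cos (2 * Real.sqrt 2 / 3 * T) * Real.exp (X/3)
noncomputable def sgFXX (X T : ℝ) : ℝ :=
  8/9 * Real.exp (X/3) ^ 2 + 16/9 * Real.exp (X/3) ^ 4 * Real.cos (2 * Real.sqrt 2 / 3 * T)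
noncomputable def sgGXX (X T : ℝ) : ℝ :=
  25/9 * Real.exp (X/3) ^ 5 + 2 * Real.exp (X/3) ^ 3
    + 1/9 * Real.exp (X/3) * Real.cos (2 * Real.sqrt 2 / 3 * T)

lemma hasDerivAt_sgF_T (X T : ℝ) : HasDerivAt (fun T' => sgF X T') (sgFT X T) T := by
  have h := ((((hasDerivAt_id T).const_mul (2 * Real.sqrt 2 / 3)).cos).const_mul
      (Real.exp (X/3) ^ 4)).const_add (1 + 2 * Real.exp (X/3) ^ 2)
  refine h.congr_deriv (Eq.symm ?_)
  all_goals simp only [sgFT, id_eq]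
  all_goals ring

lemma hasDerivAt_sgG_T (X T : ℝ) : HasDerivAt (fun T' => sgG X T') (sgGT X T) T := by
  have h := ((((hasDerivAt_id T).const_mul (2 * Real.sqrt 2 / 3)).cos).const_mul
      (Real.exp (X/3))).const_add (Real.exp (X/3) ^ 5 + 2 * Real.exp (X/3) ^ 3)
  refine h.congr_deriv (Eq.symm ?_)
  all_goals simp only [sgGT, id_eq]
  all_goals ring

lemma hasDerivAt_exp3 (X : ℝ) :
    HasDerivAt (fun X' => Real.exp (X'/3)) (Real.exp (X/3) * (1/3)) X := by
  have h := ((hasDerivAt_id X).div_const 3).exp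
  refine h.congr_deriv (Eq.symm ?_)
  all_goals simp only [id_eq]
  all_goals norm_num

lemma hasDerivAt_sgF_X (X T : ℝ) : HasDerivAt (fun X' => sgF X' T) (sgFX X T) X := by
  have h := ((hasDerivAt_const X (1:ℝ)).add
      (((hasDerivAt_exp3 X).pow 2).const_mul 2)).add
      (((hasDerivAt_exp3 X).pow 4).mul_const (Real.cos (2 * Real.sqrt 2 / 3 * T)))
  refine h.congr_deriv (Eq.symm ?_)
  all_goals simp only [sgFX, id_eq]
  all_goals push_cast
  all_goals ring

lemma hasDerivAt_sgG_X (X T : ℝ) : HasDerivAt (fun X' => sgG X' T) (sgGX X T) X := by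
  have h := (((hasDerivAt_exp3 X).pow 5).add
      (((hasDerivAt_exp3 X).pow 3).const_mul 2)).add
      ((hasDerivAt_exp3 X).mul_const (Real.cos (2 * Real.sqrt 2 / 3 * T)))
  refine h.congr_deriv (Eq.symm ?_)
  all_goals simp only [sgGX, id_eq]
  all_goals push_cast
  all_goals ring

lemma hasDerivAt_sgFT (X T : ℝ) : HasDerivAt (fun T' => sgFT X T') (sgFTT X T) T := by
  have hs2 : Real.sqrt 2 * Real.sqrt 2 = 2 := Real.mul_self_sqrt (by norm_num)
  have h := ((((hasDerivAt_id T).const_mul (2 * Real.sqrt 2 / 3)).sin).const_mul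
      (-(2 * Real.sqrt 2 / 3))).mul_const (Real.exp (X/3) ^ 4)
  refine h.congr_deriv (Eq.symm ?_)
  all_goals simp only [sgFTT, id_eq]
  all_goals linear_combination (4/9 * Real.cos (2 * Real.sqrt 2 / 3 * T) * Real.exp (X/3) ^ 4) * hs2

lemma hasDerivAt_sgGT (X T : ℝ) : HasDerivAt (fun T' => sgGT X T') (sgGTT X T) T := by
  have hs2 : Real.sqrt 2 * Real.sqrt 2 = 2 := Real.mul_self_sqrt (by norm_num)
  have h := ((((hasDerivAt_id T).const_mul (2 * Real.sqrt 2 / 3)).sin).const_mul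
      (-(2 * Real.sqrt 2 / 3))).mul_const (Real.exp (X/3))
  refine h.congr_deriv (Eq.symm ?_)
  all_goals simp only [sgGTT, id_eq]
  all_goals linear_combination (4/9 * Real.cos (2 * Real.sqrt 2 / 3 * T) * Real.exp (X/3)) * hs2

lemma hasDerivAt_sgFX (X T : ℝ) : HasDerivAt (fun X' => sgFX X' T) (sgFXX X T) X := by
  have h := (((hasDerivAt_exp3 X).pow 2).const_mul (4/3)).add
      ((((hasDerivAt_exp3 X).pow 4).const_mul (4/3)).mul_const
        (Real.cos (2 * Real.sqrt 2 / 3 * T)))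
  refine h.congr_deriv (Eq.symm ?_)
  all_goals simp only [sgFXX, id_eq]
  all_goals push_cast
  all_goals ring

lemma hasDerivAt_sgGX (X T : ℝ) : HasDerivAt (fun X' => sgGX X' T) (sgGXX X T) X := by
  have h := ((((hasDerivAt_exp3 X).pow 5).const_mul (5/3)).add
      (((hasDerivAt_exp3 X).pow 3).const_mul 2)).add
      (((hasDerivAt_exp3 X).const_mul (1/3)).mul_const (Real.cos (2 * Real.sqrt 2 / 3 * T)))
  refine h.congr_deriv (Eq.symm ?_)
  all_goals simp only [sgGXX, id_eq]
  all_goals push_cast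
  all_goals ring


lemma sg_key (q c σ s : ℝ) (hσ : σ^2 = 1 - c^2) (hs : s^2 = 2) :
    ((1+2*q^2+q^4*c)*(-(8/9)*c*q) - (q^5+2*q^3+q*c)*(-(8/9)*c*q^4))*((1+2*q^2+q^4*c)^2+(q^5+2*q^3+q*c)^2)
      - 2*((1+2*q^2+q^4*c)*(-(2*s/3)*σ*q) - (q^5+2*q^3+q*c)*(-(2*s/3)*σ*q^4))
          *((1+2*q^2+q^4*c)*(-(2*s/3)*σ*q^4)+(q^5+2*q^3+q*c)*(-(2*s/3)*σ*q))
      - (((1+2*q^2+q^4*c)*((25/9)*q^5+2*q^3+(1/9)*q*c) - (q^5+2*q^3+q*c)*((8/9)*q^2+(16/9)*q^4*c))*((1+2*q^2+q^4*c)^2+(q^5+2*q^3+q*c)^2)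
         - 2*((1+2*q^2+q^4*c)*((5/3)*q^5+2*q^3+(1/3)*q*c) - (q^5+2*q^3+q*c)*((4/3)*q^2+(4/3)*q^4*c))
             *((1+2*q^2+q^4*c)*((4/3)*q^2+(4/3)*q^4*c)+(q^5+2*q^3+q*c)*((5/3)*q^5+2*q^3+(1/3)*q*c)))
      + (1+2*q^2+q^4*c)*(q^5+2*q^3+q*c)*((1+2*q^2+q^4*c)^2-(q^5+2*q^3+q*c)^2) = 0 := by
  linear_combination
    ((-8/9)*q^3*c*σ^2 + (-8/3)*q^5*σ^2 + (-16/9)*q^5*c*σ^2 + (-8)*q^7*σ^2 + (-16/3)*q^9*σ^2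
      + (8/9)*q^9*c*σ^2 + (16/3)*q^11*σ^2 + (-8/9)*q^11*c*σ^2 + (8)*q^13*σ^2 + (8/3)*q^15*σ^2
      + (16/9)*q^15*c*σ^2 + (8/9)*q^17*c*σ^2) * hs
    + ((-16/9)*q^3*c + (-16/3)*q^5 + (-32/9)*q^5*c + (-16)*q^7 + (-32/3)*q^9 + (16/9)*q^9*c
      + (32/3)*q^11 + (-16/9)*q^11*c + (16)*q^13 + (16/3)*q^15 + (32/9)*q^15*c + (16/9)*q^17*c) * hσ

noncomputable def sgAT (X T : ℝ) : ℝ :=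
  4 * ((sgF X T * sgGTT X T - sgG X T * sgFTT X T) * (sgF X T ^ 2 + sgG X T ^ 2)
      - 2 * (sgF X T * sgGT X T - sgG X T * sgFT X T)
          * (sgF X T * sgFT X T + sgG X T * sgGT X T))
    / (sgF X T ^ 2 + sgG X T ^ 2) ^ 2

noncomputable def sgAX (X T : ℝ) : ℝ :=
  4 * ((sgF X T * sgGXX X T - sgG X T * sgFXX X T) * (sgF X T ^ 2 + sgG X T ^ 2)
      - 2 * (sgF X T * sgGX X T - sgG X T * sgFX X T)
          * (sgF X T * sgFX X T + sgG X T * sgGX X T))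
    / (sgF X T ^ 2 + sgG X T ^ 2) ^ 2

lemma hUT (X T : ℝ) : HasDerivAt (fun T' => sgU X T')
    (4 * (sgF X T * sgGT X T - sgG X T * sgFT X T) / (sgF X T ^ 2 + sgG X T ^ 2)) T :=
  hasDerivAt_angle (fun T' => sgF X T') (fun T' => sgG X T') T _ _
    (hasDerivAt_sgF_T X T) (hasDerivAt_sgG_T X T) (sgDen_pos X T) (sgFR_pos X T)

lemma hUX (X T : ℝ) : HasDerivAt (fun X' => sgU X' T)
    (4 * (sgF X T * sgGX X T - sgG X T * sgFX X T) / (sgF X T ^ 2 + sgG X T ^ 2)) X :=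
  hasDerivAt_angle (fun X' => sgF X' T) (fun X' => sgG X' T) X _ _
    (hasDerivAt_sgF_X X T) (hasDerivAt_sgG_X X T) (sgDen_pos X T) (sgFR_pos X T)

lemma hVT (X T : ℝ) : HasDerivAt
    (fun T' => 4 * (sgF X T' * sgGT X T' - sgG X T' * sgFT X T')
        / (sgF X T' ^ 2 + sgG X T' ^ 2)) (sgAT X T) T := by
  have hnum := (((hasDerivAt_sgF_T X T).mul (hasDerivAt_sgGT X T)).sub
    ((hasDerivAt_sgG_T X T).mul (hasDerivAt_sgFT X T))).const_mul (4:ℝ)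
  have hden := ((hasDerivAt_sgF_T X T).pow 2).add ((hasDerivAt_sgG_T X T).pow 2)
  have h := hnum.div hden (sgDen_pos X T).ne'
  refine h.congr_deriv (Eq.symm ?_)
  simp only [Pi.add_apply, Pi.sub_apply, Pi.mul_apply, Pi.pow_apply]
  all_goals simp only [sgAT, id_eq]
  all_goals push_cast
  all_goals ring

lemma hVX (X T : ℝ) : HasDerivAt
    (fun X' => 4 * (sgF X' T * sgGX X' T - sgG X' T * sgFX X' T)
        / (sgF X' T ^ 2 + sgG X' T ^ 2)) (sgAX X T) X := by
  have hnum := (((hasDerivAt_sgF_X X T).mul (hasDerivAt_sgGX X T)).sub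
    ((hasDerivAt_sgG_X X T).mul (hasDerivAt_sgFX X T))).const_mul (4:ℝ)
  have hden := ((hasDerivAt_sgF_X X T).pow 2).add ((hasDerivAt_sgG_X X T).pow 2)
  have h := hnum.div hden (sgDen_pos X T).ne'
  refine h.congr_deriv (Eq.symm ?_)
  simp only [Pi.add_apply, Pi.sub_apply, Pi.mul_apply, Pi.pow_apply]
  all_goals simp only [sgAX, id_eq]
  all_goals push_cast
  all_goals ring

lemma cos_sgU (X T : ℝ) : Real.cos (sgU X T)
    = 1 - 8 * sgF X T ^ 2 * sgG X T ^ 2 / (sgF X T ^ 2 + sgG X T ^ 2) ^ 2 :=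
  (cos_sin_8arctan (sgF X T) (sgG X T) (sgDen_pos X T) (sgFR_pos X T)).1

lemma sin_sgU (X T : ℝ) : Real.sin (sgU X T)
    = 4 * sgF X T * sgG X T * (sgF X T ^ 2 - sgG X T ^ 2)
        / (sgF X T ^ 2 + sgG X T ^ 2) ^ 2 :=
  (cos_sin_8arctan (sgF X T) (sgG X T) (sgDen_pos X T) (sgFR_pos X T)).2

lemma contDiff_sgU : ContDiff ℝ (⊤ : ℕ∞) (Function.uncurry sgU) := by
  have hq : ContDiff ℝ (⊤ : ℕ∞) (fun p : ℝ × ℝ => Real.exp (p.1/3)) :=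
    Real.contDiff_exp.comp (contDiff_fst.div_const 3)
  have hc : ContDiff ℝ (⊤ : ℕ∞) (fun p : ℝ × ℝ => Real.cos (2 * Real.sqrt 2 / 3 * p.2)) :=
    Real.contDiff_cos.comp (contDiff_const.mul contDiff_snd)
  have hF : ContDiff ℝ (⊤ : ℕ∞) (fun p : ℝ × ℝ => sgF p.1 p.2) := by
    simp only [sgF]
    exact (contDiff_const.add (contDiff_const.mul (hq.pow 2))).add ((hq.pow 4).mul hc)
  have hG : ContDiff ℝ (⊤ : ℕ∞) (fun p : ℝ × ℝ => sgG p.1 p.2) := by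
    simp only [sgG]
    exact ((hq.pow 5).add (contDiff_const.mul (hq.pow 3))).add (hq.mul hc)
  rw [contDiff_iff_contDiffAt]
  intro p
  have hsq : ContDiffAt ℝ (⊤ : ℕ∞)
      (fun p : ℝ × ℝ => Real.sqrt (sgF p.1 p.2 ^ 2 + sgG p.1 p.2 ^ 2)) p :=
    (((hF.pow 2).add (hG.pow 2)).contDiffAt).sqrt (sgDen_pos p.1 p.2).ne'
  have ht : ContDiffAt ℝ (⊤ : ℕ∞) (fun p : ℝ × ℝ =>
      sgG p.1 p.2 / (sgF p.1 p.2 + Real.sqrt (sgF p.1 p.2 ^ 2 + sgG p.1 p.2 ^ 2))) p :=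
    hG.contDiffAt.div (hF.contDiffAt.add hsq) (sgFR_pos p.1 p.2).ne'
  exact contDiffAt_const.mul ((Real.contDiff_arctan.contDiffAt).comp p ht)

/-- The explicit reflectionless `N = 1`, `μ = 0` formula: there is a smooth
function `U` with `cos U = 1 - 2 n² / d²` solving the sine-Gordon equation
`U_TT - U_XX + sin U = 0`. -/
theorem exact_N1_solution_solves_sineGordon :
    ∃ U : ℝ → ℝ → ℝ, ContDiff ℝ (⊤ : ℕ∞) (Function.uncurry U) ∧
      (∀ X T, Real.cos (U X T) = 1 - 2 * sgN X T ^ 2 / sgD X T ^ 2) ∧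
      (∀ X T,
        deriv (fun T' => deriv (fun T'' => U X T'') T') T
          - deriv (fun X' => deriv (fun X'' => U X'' T) X') X
          + Real.sin (U X T) = 0) := by
  refine ⟨sgU, contDiff_sgU, fun X T => ?_, fun X T => ?_⟩
  · -- the cosine identity
    have hND := sgN_identity X T
    have hDD := sgD_identity X T
    have h8 : 8 * sgF X T ^ 2 * sgG X T ^ 2 / (sgF X T ^ 2 + sgG X T ^ 2) ^ 2
        = 2 * sgN X T ^ 2 / sgD X T ^ 2 := by
      rw [div_eq_div_iff (pow_pos (sgDen_pos X T) 2).ne' (pow_pos (sgD_pos X T) 2).ne']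
      linear_combination
        (-(2 * sgD X T ^ 2) * (Real.exp (X/3) ^ 5 * sgN X T + 2 * sgF X T * sgG X T)) * hND
          + (2 * sgN X T ^ 2 * (Real.exp (X/3) ^ 5 * sgD X T
              + (sgF X T ^ 2 + sgG X T ^ 2))) * hDD
    rw [cos_sgU, h8]
  · -- the PDE
    have hinnerT : ∀ T', deriv (fun T'' => sgU X T'') T'
        = 4 * (sgF X T' * sgGT X T' - sgG X T' * sgFT X T')
            / (sgF X T' ^ 2 + sgG X T' ^ 2) := fun T' => (hUT X T').deriv
    have hinnerX : ∀ X', deriv (fun X'' => sgU X'' T) X'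
        = 4 * (sgF X' T * sgGX X' T - sgG X' T * sgFX X' T)
            / (sgF X' T ^ 2 + sgG X' T ^ 2) := fun X' => (hUX X' T).deriv
    simp only [hinnerT, hinnerX]
    rw [(hVT X T).deriv, (hVX X T).deriv, sin_sgU]
    have hσ : Real.sin (2 * Real.sqrt 2 / 3 * T) ^ 2
        = 1 - Real.cos (2 * Real.sqrt 2 / 3 * T) ^ 2 := by
      nlinarith [Real.sin_sq_add_cos_sq (2 * Real.sqrt 2 / 3 * T)]
    have hs : Real.sqrt 2 ^ 2 = 2 := Real.sq_sqrt (by norm_num)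
    have key := sg_key (Real.exp (X/3)) (Real.cos (2 * Real.sqrt 2 / 3 * T))
      (Real.sin (2 * Real.sqrt 2 / 3 * T)) (Real.sqrt 2) hσ hs
    simp only [sgAT, sgAX, sgFT, sgGT, sgFTT, sgGTT, sgFX, sgGX, sgFXX, sgGXX, sgF, sgG] at *
    rw [div_sub_div_same, ← add_div, div_eq_zero_iff]
    left
    linear_combination 4 * key
end

section
/- If Ψ satisfies 4iε Ψ_x = [[4E + z⁻¹(1-cos u), -z⁻¹ sin u - iε(u_x + u_t)],[-z⁻¹ sin u + iε(u_x + u_t), -4E - z⁻¹(1-cos u)]] Ψ, then J := A Ψ with A = [[cos(u/4), sin(u/4)],[-sin(u/4), cos(u/4)]] satisfies 4iε J_x = [[4E cos(u/2), -4D sin(u/2) - iε u_t],[-4D sin(u/2) + iε u_t, -4E cos(u/2)]] J, where D = (z + 1/z)/4 and E = (z - 1/z)/4. -/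
/-!
Differentiating `J = R(u/4) Ψ` gives `J_x = R(u/4) (Ψ_x + (u_x/4) K Ψ)` with `K` the generator of
rotations. Since `(4iε)⁻¹ · iε u_x = u_x/4`, the term `(u_x/4) K` cancels the `u_x` part of the
infinity-gauge operator exactly. The `u_x`-free remainder is conjugated by `R(u/4)` into the
symmetric-gauge operator: writing `s = sin(u/4)`, `c = cos(u/4)`, the double-angle formulas express
`sin(u/2), cos(u/2), sin u, 1 - cos u` as polynomials in `s, c`, and both sides agree modulo
`s² + c² = 1`.
-/

open Complex Matrix

noncomputable section

def rotationMatrix (θ : ℝ) : Matrix (Fin 2) (Fin 2) ℂ :=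
  !![(Real.cos θ : ℂ), (Real.sin θ : ℂ); -(Real.sin θ : ℂ), (Real.cos θ : ℂ)]

def rotationGenerator : Matrix (Fin 2) (Fin 2) ℂ := !![0, 1; -1, 0]

/- The entries are written exactly as in `symmetric_gauge_transformation`, with `ux, ut` standing
for `u_x, u_t`, so that the matrices there are these definitions unfolded. -/
def infinityLax (z : ℂ) (ε u ux ut : ℝ) : Matrix (Fin 2) (Fin 2) ℂ :=
  !![4 * ((z - z⁻¹) / 4) + z⁻¹ * (1 - Real.cos u), -z⁻¹ * Real.sin u - I * ε * (ux + ut);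
    -z⁻¹ * Real.sin u + I * ε * (ux + ut), -(4 * ((z - z⁻¹) / 4)) - z⁻¹ * (1 - Real.cos u)]

def symmetricLax (z : ℂ) (ε u ut : ℝ) : Matrix (Fin 2) (Fin 2) ℂ :=
  !![4 * ((z - z⁻¹) / 4) * Real.cos (u / 2),
      -(4 * ((z + z⁻¹) / 4)) * Real.sin (u / 2) - I * ε * ut;
    -(4 * ((z + z⁻¹) / 4)) * Real.sin (u / 2) + I * ε * ut,
      -(4 * ((z - z⁻¹) / 4)) * Real.cos (u / 2)]

theorem hasDerivAt_rotationMatrix_mulVec {θ : ℝ → ℝ} {θ' x : ℝ} {Ψ : ℝ → Fin 2 → ℂ}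
    {Ψ' : Fin 2 → ℂ} (hθ : HasDerivAt θ θ' x) (hΨ : HasDerivAt Ψ Ψ' x) :
    HasDerivAt (fun y => rotationMatrix (θ y) *ᵥ Ψ y)
      (rotationMatrix (θ x) *ᵥ (Ψ' + (θ' : ℂ) • (rotationGenerator *ᵥ Ψ x))) x := by
  have hcos := ((Real.hasDerivAt_cos (θ x)).comp x hθ).ofReal_comp
  have hsin := ((Real.hasDerivAt_sin (θ x)).comp x hθ).ofReal_comp
  have hΨ0 := hasDerivAt_pi.mp hΨ 0
  have hΨ1 := hasDerivAt_pi.mp hΨ 1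
  refine hasDerivAt_pi.mpr fun i => ?_
  fin_cases i
  · convert (hcos.mul hΨ0).add (hsin.mul hΨ1) using 1
    · funext y
      simp [rotationMatrix, mulVec, dotProduct, Fin.sum_univ_two]
    · simp [rotationMatrix, rotationGenerator, mulVec, dotProduct, Fin.sum_univ_two]
      ring
  · convert (hsin.neg.mul hΨ0).add (hcos.mul hΨ1) using 1
    · funext y
      simp [rotationMatrix, mulVec, dotProduct, Fin.sum_univ_two]
    · simp [rotationMatrix, rotationGenerator, mulVec, dotProduct, Fin.sum_univ_two]
      ring

theorem smul_infinityLax_add_smul_rotationGenerator (z : ℂ) {ε : ℝ} (hε : ε ≠ 0)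
    (u ux ut : ℝ) :
    (4 * I * ε)⁻¹ • infinityLax z ε u ux ut + ((ux / 4 : ℝ) : ℂ) • rotationGenerator =
      (4 * I * ε)⁻¹ • infinityLax z ε u 0 ut := by
  have hscalar : ((ux / 4 : ℝ) : ℂ) = (4 * I * ε)⁻¹ * (I * ε * ux) := by
    have : (ε : ℂ) ≠ 0 := by exact_mod_cast hε
    field_simp
    push_cast
    ring
  rw [hscalar, mul_smul, ← smul_add]
  congr 1
  ext i j
  fin_cases i <;> fin_cases j <;> simp [infinityLax, rotationGenerator] <;> ring

theorem rotationMatrix_mul_infinityLax (z : ℂ) (ε u ut : ℝ) :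
    rotationMatrix (u / 4) * infinityLax z ε u 0 ut =
      symmetricLax z ε u ut * rotationMatrix (u / 4) := by
  unfold rotationMatrix infinityLax symmetricLax
  set c := Real.cos (u / 4)
  set s := Real.sin (u / 4)
  have hsin_half : Real.sin (u / 2) = 2 * s * c := by
    rw [← Real.sin_two_mul]; ring_nf
  have hcos_half : Real.cos (u / 2) = c ^ 2 - s ^ 2 := by
    rw [← Real.cos_two_mul']; ring_nf
  have hsin : Real.sin u = 2 * (2 * s * c) * (c ^ 2 - s ^ 2) := by
    rw [← hsin_half, ← hcos_half, ← Real.sin_two_mul]; ring_nf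
  have hcos : Real.cos u = 1 - 2 * (2 * s * c) ^ 2 := by
    rw [← hsin_half, ← Real.cos_two_mul_eq_one_sub]; ring_nf
  have hsc : (s : ℂ) ^ 2 + (c : ℂ) ^ 2 = 1 := by exact_mod_cast Real.sin_sq_add_cos_sq _
  rw [hsin_half, hcos_half, hsin, hcos]
  clear_value c s
  ext i j
  fin_cases i <;> fin_cases j <;> simp [Matrix.mul_apply, Fin.sum_univ_two]
  · linear_combination (4 * z⁻¹ * s ^ 2 * c - (z - z⁻¹) * c) * hsc
  · linear_combination (-4 * z⁻¹ * s * c ^ 2 + (z - z⁻¹) * s) * hsc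
  · linear_combination (-4 * z⁻¹ * s * c ^ 2 + (z - z⁻¹) * s) * hsc
  · linear_combination (-4 * z⁻¹ * s ^ 2 * c + (z - z⁻¹) * c) * hsc

end

theorem symmetric_gauge_transformation_general (ε : ℝ) (hε : 0 < ε)
    (z : ℂ) (u ut : ℝ → ℝ) (hu : Differentiable ℝ u)
    (Ψ : ℝ → Fin 2 → ℂ)
    (hΨ : ∀ x, HasDerivAt Ψ
      ((4 * Complex.I * (ε : ℂ))⁻¹ •
        (Matrix.of ![![4 * ((z - z⁻¹) / 4) + z⁻¹ * (1 - Real.cos (u x)),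
            -z⁻¹ * Real.sin (u x) -
              Complex.I * ε * ((deriv u x : ℝ) + ut x)],
          ![-z⁻¹ * Real.sin (u x) +
              Complex.I * ε * ((deriv u x : ℝ) + ut x),
            -(4 * ((z - z⁻¹) / 4)) - z⁻¹ * (1 - Real.cos (u x))]]).mulVec
        (Ψ x)) x) :
    ∀ x, HasDerivAt
      (fun y => (Matrix.of
          ![![(Real.cos (u y / 4) : ℂ), (Real.sin (u y / 4) : ℂ)],
            ![-(Real.sin (u y / 4) : ℂ), (Real.cos (u y / 4) : ℂ)]]).mulVec
        (Ψ y))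
      ((4 * Complex.I * (ε : ℂ))⁻¹ •
        (Matrix.of ![![4 * ((z - z⁻¹) / 4) * Real.cos (u x / 2),
            -(4 * ((z + z⁻¹) / 4)) * Real.sin (u x / 2) -
              Complex.I * ε * ut x],
          ![-(4 * ((z + z⁻¹) / 4)) * Real.sin (u x / 2) +
              Complex.I * ε * ut x,
            -(4 * ((z - z⁻¹) / 4)) * Real.cos (u x / 2)]]).mulVec
        ((Matrix.of
          ![![(Real.cos (u x / 4) : ℂ), (Real.sin (u x / 4) : ℂ)],
            ![-(Real.sin (u x / 4) : ℂ), (Real.cos (u x / 4) : ℂ)]]).mulVec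
          (Ψ x))) x := by
  intro x
  have hJ := hasDerivAt_rotationMatrix_mulVec ((hu x).hasDerivAt.div_const 4) (hΨ x)
  convert hJ using 1
  · rfl
  change (4 * I * ε)⁻¹ • symmetricLax z ε (u x) (ut x) *ᵥ rotationMatrix (u x / 4) *ᵥ Ψ x =
    rotationMatrix (u x / 4) *ᵥ ((4 * I * ε)⁻¹ • infinityLax z ε (u x) (deriv u x) (ut x) *ᵥ Ψ x +
      ((deriv u x / 4 : ℝ) : ℂ) • rotationGenerator *ᵥ Ψ x)
  rw [← smul_mulVec (M := infinityLax z ε (u x) (deriv u x) (ut x)),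
    ← smul_mulVec (M := rotationGenerator), ← add_mulVec,
    smul_infinityLax_add_smul_rotationGenerator z hε.ne', smul_mulVec, mulVec_smul,
    mulVec_mulVec, mulVec_mulVec, rotationMatrix_mul_infinityLax]

/-- The rotation by `-u/4` conjugates the infinity-gauge Lax operator into
its symmetric-gauge form.  Here `u, ut : ℝ → ℝ` are the values of `u` and
`u_t` at a fixed time, `ux = u'`, `z ≠ 0`, `D = (z+1/z)/4`, `E = (z-1/z)/4`. -/
theorem symmetric_gauge_transformation (ε : ℝ) (hε : 0 < ε)
    (z : ℂ) (hz : z ≠ 0) (u ut : ℝ → ℝ) (hu : Differentiable ℝ u)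
    (Ψ : ℝ → Fin 2 → ℂ)
    (hΨ : ∀ x, HasDerivAt Ψ
      ((4 * Complex.I * (ε : ℂ))⁻¹ •
        (Matrix.of ![![4 * ((z - z⁻¹) / 4) + z⁻¹ * (1 - Real.cos (u x)),
            -z⁻¹ * Real.sin (u x) -
              Complex.I * ε * ((deriv u x : ℝ) + ut x)],
          ![-z⁻¹ * Real.sin (u x) +
              Complex.I * ε * ((deriv u x : ℝ) + ut x),
            -(4 * ((z - z⁻¹) / 4)) - z⁻¹ * (1 - Real.cos (u x))]]).mulVec
        (Ψ x)) x) :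
    ∀ x, HasDerivAt
      (fun y => (Matrix.of
          ![![(Real.cos (u y / 4) : ℂ), (Real.sin (u y / 4) : ℂ)],
            ![-(Real.sin (u y / 4) : ℂ), (Real.cos (u y / 4) : ℂ)]]).mulVec
        (Ψ y))
      ((4 * Complex.I * (ε : ℂ))⁻¹ •
        (Matrix.of ![![4 * ((z - z⁻¹) / 4) * Real.cos (u x / 2),
            -(4 * ((z + z⁻¹) / 4)) * Real.sin (u x / 2) -
              Complex.I * ε * ut x],
          ![-(4 * ((z + z⁻¹) / 4)) * Real.sin (u x / 2) +
              Complex.I * ε * ut x,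
            -(4 * ((z - z⁻¹) / 4)) * Real.cos (u x / 2)]]).mulVec
        ((Matrix.of
          ![![(Real.cos (u x / 4) : ℂ), (Real.sin (u x / 4) : ℂ)],
            ![-(Real.sin (u x / 4) : ℂ), (Real.cos (u x / 4) : ℂ)]]).mulVec
          (Ψ x))) x :=
  symmetric_gauge_transformation_general ε hε z u ut hu Ψ hΨ
end

section
/- Let G(z) be a 2×2 matrix-valued function meromorphic on ℂ \ ℝ with only simple poles, continuous up to ℝ from both sides with G₊ = G₋ on ℝ, such that at each pole z₀ the residue satisfies Res_{z₀} G = lim_{z→z₀} G(z) · N for a nilpotent constant matrix N (either strictly lower or strictly upper triangular). Then det G(z) extends to an entire function; if moreover G(z) → I as z → ∞ then det G ≡ 1. -/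
open Complex Matrix Filter Topology

/-- `N` is a strictly lower or strictly upper triangular 2×2 matrix. -/
def StrictlyTriangular (N : Matrix (Fin 2) (Fin 2) ℂ) : Prop :=
  N 0 0 = 0 ∧ N 1 1 = 0 ∧ (N 0 1 = 0 ∨ N 1 0 = 0)

/-- At `p`, `G` has (at worst) a simple pole whose residue satisfies
`Res_p G = lim_{z→p} G(z)·N`; equivalently `G(z)(I + (z-p)⁻¹ N)` with
nilpotent `N` of the opposite column extends analytically, i.e. `G` factors
as `H(z)·(I + (z-p)⁻¹ N)` with `H` analytic near `p`. -/
def SimplePoleResidueRel (G : ℂ → Matrix (Fin 2) (Fin 2) ℂ) (p : ℂ)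
    (N : Matrix (Fin 2) (Fin 2) ℂ) : Prop :=
  ∃ U ∈ 𝓝 p, ∃ H : ℂ → Matrix (Fin 2) (Fin 2) ℂ,
    (∀ i j : Fin 2, DifferentiableOn ℂ (fun z => H z i j) U) ∧
    ∀ z ∈ U, z ≠ p → G z = H z * (1 + (z - p)⁻¹ • N)

/-!
Near a pole `p` the residue condition reads `G = H · (1 + (z - p)⁻¹ N)` with `H` holomorphic,
and `det (1 + c N) = 1` for strictly triangular `N`; so `det G = det H` has a limit at `p`.
On `ℝ` it has the limit `det G_b`. Hence `det G` extends by continuity to a continuous function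
on `ℂ` that is holomorphic off `ℝ ∪ P`. Such a function is entire by Morera's theorem: every
rectangle splits along `ℝ` into two rectangles whose interiors miss `ℝ`, and Cauchy–Goursat
tolerates the finitely many points of `P`. If `G → 1` at infinity, Liouville's theorem gives
`det G ≡ 1`.
-/

open Set

namespace Complex

variable {E : Type*} [NormedAddCommGroup E] [NormedSpace ℂ E] {f : ℂ → E} {s : Set ℂ}

theorem wedgeIntegral_add_wedgeIntegral_eq_zero_of_zero_notMem_Ioo (hc : Continuous f)
    (hs : s.Countable) (hd : ∀ z, z.im ≠ 0 → z ∉ s → DifferentiableAt ℂ f z) {z w : ℂ}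
    (h0 : (0 : ℝ) ∉ Ioo (min z.im w.im) (max z.im w.im)) :
    wedgeIntegral z w f + wedgeIntegral w z f = 0 := by
  rw [wedgeIntegral_add_wedgeIntegral_eq]
  exact integral_boundary_rect_eq_zero_of_differentiable_on_off_countable f z w s hs
    hc.continuousOn fun u ⟨hu, hus⟩ => hd u (fun hu0 => h0 (hu0 ▸ hu.2)) hus

/-- The two rectangles share their edge on `ℝ`, whose contributions cancel. -/
theorem wedgeIntegral_add_wedgeIntegral_eq_add_re (hc : Continuous f) (z w : ℂ) :
    wedgeIntegral z w f + wedgeIntegral w z f =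
      (wedgeIntegral z (w.re : ℂ) f + wedgeIntegral (w.re : ℂ) z f) +
        (wedgeIntegral (z.re : ℂ) w f + wedgeIntegral w (z.re : ℂ) f) := by
  simp only [wedgeIntegral_add_wedgeIntegral_eq, ofReal_re, ofReal_im]
  have hv : ∀ x : ℝ,
      (∫ y in z.im..0, f (x + y * I)) + (∫ y in (0 : ℝ)..w.im, f (x + y * I)) =
        ∫ y in z.im..w.im, f (x + y * I) := fun x =>
    intervalIntegral.integral_add_adjacent_intervals
      (Continuous.intervalIntegrable (by fun_prop) _ _)
      (Continuous.intervalIntegrable (by fun_prop) _ _)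
  rw [← hv w.re, ← hv z.re]
  simp only [smul_add]
  abel

theorem isConservativeOn_univ_of_differentiableAt_of_im_ne_zero (hc : Continuous f)
    (hs : s.Countable) (hd : ∀ z, z.im ≠ 0 → z ∉ s → DifferentiableAt ℂ f z) :
    IsConservativeOn f univ := by
  intro z w _
  rw [← add_eq_zero_iff_eq_neg, wedgeIntegral_add_wedgeIntegral_eq_add_re hc,
    wedgeIntegral_add_wedgeIntegral_eq_zero_of_zero_notMem_Ioo hc hs hd,
    wedgeIntegral_add_wedgeIntegral_eq_zero_of_zero_notMem_Ioo hc hs hd, add_zero] <;>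
  simp +contextual [le_of_lt]

theorem differentiable_of_continuous_of_differentiableAt_of_im_ne_zero [CompleteSpace E]
    (hc : Continuous f) (hs : s.Countable)
    (hd : ∀ z, z.im ≠ 0 → z ∉ s → DifferentiableAt ℂ f z) : Differentiable ℂ f :=
  differentiableOn_univ.1 <| (isConservativeOn_and_continuousOn_iff_isDifferentiableOn
    isOpen_univ).1 ⟨isConservativeOn_univ_of_differentiableAt_of_im_ne_zero hc hs hd,
      hc.continuousOn⟩

end Complex

theorem DifferentiableOn.matrix_det {𝕜 n : Type*} [NontriviallyNormedField 𝕜] [Fintype n]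
    [DecidableEq n] {M : 𝕜 → Matrix n n 𝕜} {s : Set 𝕜}
    (hM : ∀ i j, DifferentiableOn 𝕜 (fun x => M x i j) s) :
    DifferentiableOn 𝕜 (fun x => (M x).det) s := by
  simp only [det_apply, Units.smul_def]
  exact DifferentiableOn.fun_sum fun σ _ =>
    (DifferentiableOn.fun_finsetProd fun i _ => hM (σ i) i).const_smul (Equiv.Perm.sign σ : ℤ)

theorem StrictlyTriangular.det_one_add_smul {N : Matrix (Fin 2) (Fin 2) ℂ}
    (hN : StrictlyTriangular N) (c : ℂ) : (1 + c • N).det = 1 := by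
  obtain ⟨h00, h11, h01 | h10⟩ := hN <;> simp [det_fin_two, *]

theorem SimplePoleResidueRel.exists_tendsto_det {G : ℂ → Matrix (Fin 2) (Fin 2) ℂ} {p : ℂ}
    {N : Matrix (Fin 2) (Fin 2) ℂ} (hG : SimplePoleResidueRel G p N)
    (hN : StrictlyTriangular N) : ∃ d, Tendsto (fun z => (G z).det) (𝓝[≠] p) (𝓝 d) := by
  obtain ⟨U, hU, H, hH, hGH⟩ := hG
  refine ⟨(H p).det, ?_⟩
  have hcont : ContinuousAt (fun z => (H z).det) p :=
    ((DifferentiableOn.matrix_det hH).differentiableAt hU).continuousAt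
  refine (hcont.tendsto.mono_left nhdsWithin_le_nhds).congr' ?_
  filter_upwards [self_mem_nhdsWithin, mem_nhdsWithin_of_mem_nhds hU] with z hzp hzU
  rw [hGH z hzU hzp, det_mul, hN.det_one_add_smul, mul_one]

theorem Dense.tendsto_cocompact_of_eqOn {X Y : Type*} [TopologicalSpace X] [T2Space X]
    [TopologicalSpace Y] [RegularSpace Y] {F g : X → Y} {S : Set X} {y : Y} (hS : Dense S)
    (hF : Continuous F) (hFg : EqOn F g S) (hg : Tendsto g (cocompact X) (𝓝 y)) :
    Tendsto F (cocompact X) (𝓝 y) := by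
  refine (closed_nhds_basis y).tendsto_right_iff.2 fun V ⟨hV, hVc⟩ => ?_
  obtain ⟨K, hK, hKV⟩ := mem_cocompact.1 (hg hV)
  refine mem_cocompact.2 ⟨K, hK, ?_⟩
  calc Kᶜ ⊆ closure (Kᶜ ∩ S) := hS.open_subset_closure_inter hK.isClosed.isOpen_compl
    _ ⊆ F ⁻¹' V := closure_minimal (fun x hx => by simpa [hFg hx.2] using hKV hx.1)
        (hVc.preimage hF)

theorem det_extends_entire_and_eq_one_general
    (P : Finset ℂ)
    (G : ℂ → Matrix (Fin 2) (Fin 2) ℂ)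
    (hAnal : ∀ i j : Fin 2,
      DifferentiableOn ℂ (fun z => G z i j) {z : ℂ | z.im ≠ 0 ∧ z ∉ P})
    (hRes : ∀ p ∈ P, ∃ N : Matrix (Fin 2) (Fin 2) ℂ,
      StrictlyTriangular N ∧ SimplePoleResidueRel G p N)
    (hBdry : ∃ Gb : ℝ → Matrix (Fin 2) (Fin 2) ℂ, ∀ x : ℝ,
      Tendsto G (nhdsWithin (x : ℂ) {z : ℂ | z.im ≠ 0}) (nhds (Gb x))) :
    ∃ F : ℂ → ℂ, Differentiable ℂ F ∧
      (∀ z : ℂ, z.im ≠ 0 → z ∉ P → F z = (G z).det) ∧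
      (Tendsto G (cocompact ℂ) (nhds (1 : Matrix (Fin 2) (Fin 2) ℂ)) →
        ∀ z : ℂ, F z = 1) := by
  obtain ⟨Gb, hGb⟩ := hBdry
  set S : Set ℂ := {z | z.im ≠ 0 ∧ z ∉ P}
  have hS_open : IsOpen S :=
    (isOpen_ne.preimage continuous_im).inter P.finite_toSet.isClosed.isOpen_compl
  have hS_dense : Dense S :=
    ((dense_compl_singleton (0 : ℝ)).preimage isOpenMap_im).inter_of_isOpen_left
      (P.finite_toSet.countable.dense_compl ℂ) (isOpen_ne.preimage continuous_im)
  have hdet : DifferentiableOn ℂ (fun z => (G z).det) S := DifferentiableOn.matrix_det hAnal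
  have hlim : ∀ x, ∃ d, Tendsto (fun z => (G z).det) (𝓝[S] x) (𝓝 d) := by
    intro x
    by_cases hx : x ∈ S
    · exact ⟨_, hdet.continuousOn x hx⟩
    by_cases hxP : x ∈ P
    · obtain ⟨N, hN, hG⟩ := hRes x hxP
      obtain ⟨d, hd⟩ := hG.exists_tendsto_det hN
      exact ⟨d, hd.mono_left (nhdsWithin_mono _ fun z hz (hzx : z = x) => hz.2 (hzx ▸ hxP))⟩
    have hx_real : ((x.re : ℝ) : ℂ) = x := Complex.ext rfl
      ((ofReal_im _).trans (not_not.1 fun h => hx ⟨h, hxP⟩).symm)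
    refine ⟨_, ((continuous_id.matrix_det.tendsto _).comp (hGb x.re)).mono_left ?_⟩
    exact hx_real ▸ nhdsWithin_mono _ fun z hz => hz.1
  set F := extendFrom S fun z => (G z).det
  have hF_cont : Continuous F := continuous_extendFrom hS_dense hlim
  have hF_eq : EqOn F (fun z => (G z).det) S := extendFrom_extends hdet.continuousOn
  have hF_diff : Differentiable ℂ F := by
    refine differentiable_of_continuous_of_differentiableAt_of_im_ne_zero hF_cont
      P.finite_toSet.countable fun z hz hzP => ?_
    refine (hdet.differentiableAt (hS_open.mem_nhds ⟨hz, hzP⟩)).congr_of_eventuallyEq ?_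
    exact eventually_of_mem (hS_open.mem_nhds ⟨hz, hzP⟩) hF_eq
  refine ⟨F, hF_diff, fun z hz hzP => hF_eq ⟨hz, hzP⟩, fun hG z => ?_⟩
  refine hF_diff.apply_eq_of_tendsto_cocompact z
    (hS_dense.tendsto_cocompact_of_eqOn hF_cont hF_eq ?_)
  simpa [Function.comp_def] using (continuous_id.matrix_det.tendsto 1).comp hG

/-- Determinant lemma for the Riemann–Hilbert problem: if `G` is analytic
off `ℝ ∪ P` with only simple poles at `P` satisfying the nilpotent residue
relations, and extends continuously to `ℝ` with trivial jump, then `det G`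
extends to an entire function, which is identically `1` whenever
`G(z) → I` as `z → ∞`. -/
theorem det_extends_entire_and_eq_one
    (P : Finset ℂ) (hP : ∀ p ∈ P, p.im ≠ 0)
    (G : ℂ → Matrix (Fin 2) (Fin 2) ℂ)
    (hAnal : ∀ i j : Fin 2,
      DifferentiableOn ℂ (fun z => G z i j) {z : ℂ | z.im ≠ 0 ∧ z ∉ P})
    (hRes : ∀ p ∈ P, ∃ N : Matrix (Fin 2) (Fin 2) ℂ,
      StrictlyTriangular N ∧ SimplePoleResidueRel G p N)
    (hBdry : ∃ Gb : ℝ → Matrix (Fin 2) (Fin 2) ℂ, ∀ x : ℝ,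
      Tendsto G (nhdsWithin (x : ℂ) {z : ℂ | z.im ≠ 0}) (nhds (Gb x))) :
    ∃ F : ℂ → ℂ, Differentiable ℂ F ∧
      (∀ z : ℂ, z.im ≠ 0 → z ∉ P → F z = (G z).det) ∧
      (Tendsto G (cocompact ℂ) (nhds (1 : Matrix (Fin 2) (Fin 2) ℂ)) →
        ∀ z : ℂ, F z = 1) :=
  det_extends_entire_and_eq_one_general P G hAnal hRes hBdry
end

section
/- Let ε > 0, T = min{ε, 1}, p ≥ 1, and let X denote the space of measurable U : ℝ × [0,T] → ℝ with ‖U‖ := sup_{0≤t≤T} ‖U(·,t)‖_{Lᵖ(ℝ)} < ∞. Define (𝒮U)(x,t) = -(1/(2ε²)) ∫₀ᵗ ∫_{x-(t-t₀)}^{x+(t-t₀)} sin(U(x₀,t₀) + b(x₀)) dx₀ dt₀. Then for all U, V ∈ X, ‖𝒮U - 𝒮V‖ ≤ (T²/(2ε²)) ‖U - V‖ ≤ (1/2)‖U - V‖; in particular 𝒮 (and hence A + 𝒮) is a contraction on X. -/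
/-!
Since `sin` is 1-Lipschitz, `|𝒮U - 𝒮V|(x,t)` is at most `1/(2ε²)` times the integral of
`|U - V|` over the backward light cone of `(x,t)`, a triangle of area `t²`. Writing that cone as
the translate by `x` of the cone at the origin, the `Lᵖ` norm in `x` of this integral is bounded,
by a Minkowski-type inequality (Hölder on the cone and Tonelli, or an a.e. bound when `p = ∞`),
by `t² · sup_{t₀ ≤ t} ‖(U - V)(·,t₀)‖_{Lᵖ}`. Finally `t ≤ T ≤ ε` makes `t²/(2ε²) ≤ 1/2`.
-/

open MeasureTheory Set ENNReal
open scoped NNReal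

theorem rpow_lintegral_le_measure_univ_rpow_mul {α : Type*} [MeasurableSpace α] {μ : Measure α}
    {f : α → ℝ≥0∞} (hf : AEMeasurable f μ) {r : ℝ} (hr : 1 ≤ r) :
    (∫⁻ a, f a ∂μ) ^ r ≤ μ univ ^ (r - 1) * ∫⁻ a, f a ^ r ∂μ := by
  have hr0 : 0 < r := zero_lt_one.trans_le hr
  have hHolder := eLpNorm'_le_eLpNorm'_mul_rpow_measure_univ zero_lt_one hr hf.aestronglyMeasurable
  simp only [eLpNorm'_eq_lintegral_enorm, enorm_eq_self, rpow_one, div_one] at hHolder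
  calc (∫⁻ a, f a ∂μ) ^ r
      ≤ ((∫⁻ a, f a ^ r ∂μ) ^ (1 / r) * μ univ ^ (1 - 1 / r)) ^ r := by gcongr
    _ = μ univ ^ (r - 1) * ∫⁻ a, f a ^ r ∂μ := by
      rw [mul_rpow_of_nonneg _ _ hr0.le, ← rpow_mul, ← rpow_mul, one_div_mul_cancel hr0.ne',
        rpow_one, mul_comm, sub_mul, one_div_mul_cancel hr0.ne', one_mul]

section LintegralFamily

variable {Z X : Type*} [MeasurableSpace Z] [MeasurableSpace X] {μ : Measure Z} {ν : Measure X}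
  [SFinite μ] [SFinite ν] {F : Z → X → ℝ≥0∞} {M : ℝ≥0∞}

theorem eLpNormEssSup_lintegral_le_measure_univ_mul (hF : Measurable (Function.uncurry F))
    (hM : ∀ᵐ z ∂μ, eLpNormEssSup (F z) ν ≤ M) :
    eLpNormEssSup (fun x => ∫⁻ z, F z x ∂μ) ν ≤ μ univ * M := by
  have hle : ∀ᵐ z ∂μ, ∀ᵐ x ∂ν, F z x ≤ M := by
    filter_upwards [hM] with z hz
    filter_upwards [enorm_ae_le_eLpNormEssSup (F z) ν] with x hx
    exact hx.trans hz
  replace hle := (Measure.ae_ae_comm (p := fun z x => F z x ≤ M)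
    (measurableSet_le hF measurable_const)).1 hle
  refine essSup_le_of_ae_le _ ?_
  filter_upwards [hle] with x hx
  calc ‖∫⁻ z, F z x ∂μ‖ₑ = ∫⁻ z, F z x ∂μ := enorm_eq_self _
    _ ≤ ∫⁻ _, M ∂μ := lintegral_mono_ae hx
    _ = μ univ * M := by rw [lintegral_const, mul_comm]

theorem lintegral_rpow_lintegral_le_measure_univ_mul_rpow (hF : Measurable (Function.uncurry F))
    {r : ℝ} (hr : 1 ≤ r)
    (hM : ∀ᵐ z ∂μ, ∫⁻ x, F z x ^ r ∂ν ≤ M ^ r) :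
    ∫⁻ x, (∫⁻ z, F z x ∂μ) ^ r ∂ν ≤ (μ univ * M) ^ r := by
  have hFr : Measurable (Function.uncurry fun z x => F z x ^ r) := hF.pow_const r
  have hFr_lint_meas : Measurable fun x => ∫⁻ z, F z x ^ r ∂μ := hFr.lintegral_prod_left'
  calc ∫⁻ x, (∫⁻ z, F z x ∂μ) ^ r ∂ν
      ≤ ∫⁻ x, μ univ ^ (r - 1) * ∫⁻ z, F z x ^ r ∂μ ∂ν := lintegral_mono fun x =>
        rpow_lintegral_le_measure_univ_rpow_mul (hF.comp measurable_prodMk_right).aemeasurable hr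
    _ = μ univ ^ (r - 1) * ∫⁻ z, ∫⁻ x, F z x ^ r ∂ν ∂μ := by
      rw [lintegral_const_mul _ hFr_lint_meas, lintegral_lintegral_swap hFr.aemeasurable]
    _ ≤ μ univ ^ (r - 1) * ∫⁻ _, M ^ r ∂μ := by gcongr _ * ?_; exact lintegral_mono_ae hM
    _ = (μ univ * M) ^ r := by
      have hsplit : μ univ ^ r = μ univ ^ (r - 1) * μ univ := by
        conv_lhs => rw [← sub_add_cancel r 1, rpow_add_of_nonneg _ _ (by linarith) zero_le_one,
          rpow_one]
      rw [lintegral_const, mul_rpow_of_nonneg _ _ (by linarith), hsplit, mul_comm (M ^ r),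
        mul_assoc]

theorem eLpNorm_lintegral_le_measure_univ_mul (hF : Measurable (Function.uncurry F))
    {p : ℝ≥0∞} (hp : 1 ≤ p)
    (hM : ∀ᵐ z ∂μ, eLpNorm (F z) p ν ≤ M) :
    eLpNorm (fun x => ∫⁻ z, F z x ∂μ) p ν ≤ μ univ * M := by
  rcases eq_or_ne p ∞ with rfl | hp_top
  · simp only [eLpNorm_exponent_top] at hM ⊢
    exact eLpNormEssSup_lintegral_le_measure_univ_mul hF hM
  have hp0 : p ≠ 0 := (zero_lt_one.trans_le hp).ne'
  have hr : 1 ≤ p.toReal := by simpa using ENNReal.toReal_mono hp_top hp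
  have hr0 : 0 < p.toReal := zero_lt_one.trans_le hr
  simp only [eLpNorm_eq_lintegral_rpow_enorm_toReal hp0 hp_top, enorm_eq_self] at hM ⊢
  rw [one_div, rpow_inv_le_iff hr0]
  refine lintegral_rpow_lintegral_le_measure_univ_mul_rpow hF hr ?_
  filter_upwards [hM] with z hz
  rwa [one_div, rpow_inv_le_iff hr0] at hz

end LintegralFamily

theorem setIntegral_regionBetween {α E : Type*} [MeasurableSpace α] [NormedAddCommGroup E]
    [NormedSpace ℝ E] {μ : Measure α} [SFinite μ] {f g : α → ℝ} {s : Set α}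
    (hf : Measurable f) (hg : Measurable g) (hs : MeasurableSet s) (hfg : ∀ x ∈ s, f x ≤ g x)
    {F : α × ℝ → E} (hF : IntegrableOn F (regionBetween f g s) (μ.prod volume)) :
    ∫ z in regionBetween f g s, F z ∂μ.prod volume = ∫ x in s, (∫ y in f x..g x, F (x, y)) ∂μ := by
  have hsection : ∀ x y, (regionBetween f g s).indicator F (x, y) =
      s.indicator (fun x => (Ioo (f x) (g x)).indicator (fun y => F (x, y)) y) x := by
    intro x y
    simp only [indicator, regionBetween, mem_ofPred_eq]
    by_cases hx : x ∈ s <;> simp [hx]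
  rw [← integral_indicator (measurableSet_regionBetween hf hg hs),
    integral_prod _ ((integrable_indicator_iff (measurableSet_regionBetween hf hg hs)).2 hF),
    ← integral_indicator hs]
  refine integral_congr_ae (Filter.Eventually.of_forall fun x => ?_)
  by_cases hx : x ∈ s
  · simp only [hsection, indicator_of_mem hx, integral_indicator measurableSet_Ioo,
      intervalIntegral.integral_of_le (hfg x hx), integral_Ioc_eq_integral_Ioo]
  · simp [hsection, hx]

-- The backward light cone of `(x, t)`, translated to `x = 0`: points are `(t₀, x₀ - x)`.
def lightCone (t : ℝ) : Set (ℝ × ℝ) :=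
  regionBetween (fun t₀ => -(t - t₀)) (fun t₀ => t - t₀) (Ioc 0 t)

theorem measurableSet_lightCone (t : ℝ) : MeasurableSet (lightCone t) :=
  measurableSet_regionBetween (by fun_prop) (by fun_prop) measurableSet_Ioc

theorem volume_lightCone {t : ℝ} (ht : 0 ≤ t) : volume (lightCone t) = ENNReal.ofReal (t ^ 2) := by
  rw [lightCone, Measure.volume_eq_prod, volume_regionBetween_eq_integral
    (Continuous.integrableOn_Ioc (by fun_prop)) (Continuous.integrableOn_Ioc (by fun_prop))
    measurableSet_Ioc (fun τ hτ => by linarith [hτ.2]), ← intervalIntegral.integral_of_le ht]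
  congr 1
  simp only [Pi.sub_apply, sub_neg_eq_add]
  have hint : IntervalIntegrable (fun τ => t - τ) volume 0 t := by
    apply Continuous.intervalIntegrable; fun_prop
  rw [intervalIntegral.integral_add hint hint, intervalIntegral.integral_comp_sub_left (fun τ => τ)]
  simp

theorem intervalIntegral_eq_setIntegral_lightCone {E : Type*} [NormedAddCommGroup E]
    [NormedSpace ℝ E] {t : ℝ} (ht : 0 ≤ t) (x : ℝ) {f : ℝ × ℝ → E}
    (hf : IntegrableOn (fun z => f (z.1, x + z.2)) (lightCone t)) :
    ∫ t₀ in (0 : ℝ)..t, ∫ x₀ in (x - (t - t₀))..(x + (t - t₀)), f (t₀, x₀)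
      = ∫ z in lightCone t, f (z.1, x + z.2) := by
  rw [Measure.volume_eq_prod] at hf ⊢
  rw [lightCone, setIntegral_regionBetween (by fun_prop) (by fun_prop) measurableSet_Ioc
    (fun τ hτ => by linarith [hτ.2]) hf, intervalIntegral.integral_of_le ht]
  congr 1 with t₀
  rw [intervalIntegral.integral_comp_add_left (fun x₀ => f (t₀, x₀)), sub_eq_add_neg]

noncomputable def waveDuhamel (φ : ℝ → ℝ) (u : ℝ × ℝ → ℝ) (x t : ℝ) : ℝ :=
  ∫ t₀ in (0 : ℝ)..t, ∫ x₀ in (x - (t - t₀))..(x + (t - t₀)), φ (u (t₀, x₀))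

theorem enorm_waveDuhamel_sub_le {φ : ℝ → ℝ} {K : ℝ≥0} (hφ : LipschitzWith K φ)
    {C : ℝ} (hφC : ∀ a, |φ a| ≤ C) {u v : ℝ × ℝ → ℝ} (hu : Measurable u) (hv : Measurable v)
    {t : ℝ} (ht : 0 ≤ t) (x : ℝ) :
    ‖waveDuhamel φ u x t - waveDuhamel φ v x t‖ₑ
      ≤ K * ∫⁻ z in lightCone t, ‖u (z.1, x + z.2) - v (z.1, x + z.2)‖ₑ := by
  have hshift : Measurable fun z : ℝ × ℝ => (z.1, x + z.2) := by fun_prop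
  have hint : ∀ w : ℝ × ℝ → ℝ, Measurable w →
      IntegrableOn (fun z => φ (w (z.1, x + z.2))) (lightCone t) := fun w hw =>
    Measure.integrableOn_of_bounded (by simp [volume_lightCone ht])
      (hφ.continuous.measurable.comp (hw.comp hshift)).aestronglyMeasurable
      (Filter.Eventually.of_forall fun z => hφC _)
  have hcone : ∀ w : ℝ × ℝ → ℝ, Measurable w →
      waveDuhamel φ w x t = ∫ z in lightCone t, φ (w (z.1, x + z.2)) := fun w hw =>
    intervalIntegral_eq_setIntegral_lightCone (f := fun y => φ (w y)) ht x (hint w hw)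
  rw [hcone u hu, hcone v hv, ← integral_sub (hint u hu) (hint v hv)]
  calc _ ≤ ∫⁻ z in lightCone t, ‖φ (u (z.1, x + z.2)) - φ (v (z.1, x + z.2))‖ₑ :=
        enorm_integral_le_lintegral_enorm _
    _ ≤ ∫⁻ z in lightCone t, K * ‖u (z.1, x + z.2) - v (z.1, x + z.2)‖ₑ := by
        gcongr with z
        simpa only [edist_eq_enorm_sub] using hφ _ _
    _ = _ := lintegral_const_mul _ (by fun_prop)

theorem eLpNorm_setLIntegral_lightCone_le {w : ℝ × ℝ → ℝ} (hw : Measurable w) {t : ℝ}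
    (ht : 0 ≤ t) {p : ℝ≥0∞} (hp : 1 ≤ p) {M : ℝ≥0∞}
    (hM : ∀ t₀ ∈ Ioc 0 t, eLpNorm (fun x => w (t₀, x)) p volume ≤ M) :
    eLpNorm (fun x => ∫⁻ z in lightCone t, ‖w (z.1, x + z.2)‖ₑ) p volume
      ≤ ENNReal.ofReal (t ^ 2) * M := by
  have hF : Measurable (Function.uncurry fun (z : ℝ × ℝ) (x : ℝ) => ‖w (z.1, x + z.2)‖ₑ) :=
    (hw.comp (by fun_prop)).enorm
  have hslice : ∀ z ∈ lightCone t, eLpNorm (fun x => ‖w (z.1, x + z.2)‖ₑ) p volume ≤ M := by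
    intro z hz
    rw [eLpNorm_enorm]
    calc eLpNorm (fun x => w (z.1, x + z.2)) p volume = eLpNorm (fun x => w (z.1, x)) p volume :=
          eLpNorm_comp_measurePreserving (g := fun x => w (z.1, x))
            (hw.comp measurable_prodMk_left).aestronglyMeasurable
            (measurePreserving_add_right volume z.2)
      _ ≤ M := hM z.1 hz.1
  have h := eLpNorm_lintegral_le_measure_univ_mul hF hp (μ := volume.restrict (lightCone t))
    (ae_restrict_of_forall_mem (measurableSet_lightCone t) hslice)
  rwa [Measure.restrict_apply_univ, volume_lightCone ht] at h

theorem eLpNorm_waveDuhamel_sub_le {φ : ℝ → ℝ} {K : ℝ≥0} (hφ : LipschitzWith K φ)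
    {C : ℝ} (hφC : ∀ a, |φ a| ≤ C) {u v : ℝ × ℝ → ℝ} (hu : Measurable u) (hv : Measurable v)
    {t : ℝ} (ht : 0 ≤ t) {p : ℝ≥0∞} (hp : 1 ≤ p) {M : ℝ≥0∞}
    (hM : ∀ t₀ ∈ Ioc 0 t, eLpNorm (fun x => u (t₀, x) - v (t₀, x)) p volume ≤ M) :
    eLpNorm (fun x => waveDuhamel φ u x t - waveDuhamel φ v x t) p volume
      ≤ K * (ENNReal.ofReal (t ^ 2) * M) :=
  (eLpNorm_le_mul_eLpNorm_of_ae_le_mul' (Filter.Eventually.of_forall fun x =>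
    (enorm_waveDuhamel_sub_le hφ hφC hu hv ht x).trans_eq (by rw [enorm_eq_self])) p).trans
    (by gcongr; exact eLpNorm_setLIntegral_lightCone_le (w := u - v) (hu.sub hv) ht hp hM)

theorem ofReal_min_one_sq_div_le_half (ε : ℝ) :
    ENNReal.ofReal (min ε 1 ^ 2 / (2 * ε ^ 2)) ≤ 1 / 2 := by
  have hsq : min ε 1 ^ 2 ≤ ε ^ 2 := by
    rcases le_total ε 1 with hε | hε
    · rw [min_eq_left hε]
    · rw [min_eq_right hε]; nlinarith
  rw [← ENNReal.ofReal_one, ← ENNReal.ofReal_ofNat 2, ← ENNReal.ofReal_div_of_pos two_pos]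
  refine ENNReal.ofReal_le_ofReal ?_
  rcases eq_or_ne ε 0 with rfl | hε
  · simp
  · rw [div_le_div_iff₀ (by positivity) two_pos]; linarith

theorem duhamel_operator_contraction_general (ε : ℝ)
    (T : ℝ) (hT : T = min ε 1) (p : ENNReal) (hp : 1 ≤ p)
    (b : ℝ → ℝ) (hb : Measurable b)
    (U V : ℝ → ℝ → ℝ)
    (hUm : Measurable (Function.uncurry U))
    (hVm : Measurable (Function.uncurry V))
    (SU SV : ℝ → ℝ → ℝ)
    (hSU : ∀ x t, SU x t = -(1 / (2 * ε ^ 2)) *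
      ∫ t₀ in (0 : ℝ)..t, ∫ x₀ in (x - (t - t₀))..(x + (t - t₀)),
        Real.sin (U x₀ t₀ + b x₀))
    (hSV : ∀ x t, SV x t = -(1 / (2 * ε ^ 2)) *
      ∫ t₀ in (0 : ℝ)..t, ∫ x₀ in (x - (t - t₀))..(x + (t - t₀)),
        Real.sin (V x₀ t₀ + b x₀)) :
    (⨆ t ∈ Set.Icc (0 : ℝ) T,
        eLpNorm (fun x => SU x t - SV x t) p (volume : Measure ℝ))
      ≤ ENNReal.ofReal (T ^ 2 / (2 * ε ^ 2)) *
          (⨆ t ∈ Set.Icc (0 : ℝ) T,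
            eLpNorm (fun x => U x t - V x t) p (volume : Measure ℝ)) ∧
    ENNReal.ofReal (T ^ 2 / (2 * ε ^ 2)) *
        (⨆ t ∈ Set.Icc (0 : ℝ) T,
          eLpNorm (fun x => U x t - V x t) p (volume : Measure ℝ))
      ≤ (1 / 2 : ENNReal) *
          (⨆ t ∈ Set.Icc (0 : ℝ) T,
            eLpNorm (fun x => U x t - V x t) p (volume : Measure ℝ)) := by
  set M := ⨆ t ∈ Set.Icc (0 : ℝ) T, eLpNorm (fun x => U x t - V x t) p (volume : Measure ℝ)
  set u : ℝ × ℝ → ℝ := fun y => U y.2 y.1 + b y.2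
  set v : ℝ × ℝ → ℝ := fun y => V y.2 y.1 + b y.2
  have hu : Measurable u := (hUm.comp measurable_swap).add (hb.comp measurable_snd)
  have hv : Measurable v := (hVm.comp measurable_swap).add (hb.comp measurable_snd)
  have hslice : ∀ t ∈ Icc 0 T, eLpNorm (fun x => SU x t - SV x t) p volume
      ≤ ENNReal.ofReal (1 / (2 * ε ^ 2)) * (ENNReal.ofReal (t ^ 2) * M) := by
    intro t ht
    have hM : ∀ t₀ ∈ Ioc 0 t, eLpNorm (fun x => u (t₀, x) - v (t₀, x)) p volume ≤ M :=
      fun t₀ ht₀ => by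
        simpa only [u, v, add_sub_add_right_eq_sub] using le_iSup₂ (f := fun s (_ : s ∈ Icc 0 T) =>
          eLpNorm (fun x => U x s - V x s) p volume) t₀ ⟨ht₀.1.le, ht₀.2.trans ht.2⟩
    have hS : ∀ x, ‖SU x t - SV x t‖
        = 1 / (2 * ε ^ 2) * ‖waveDuhamel Real.sin u x t - waveDuhamel Real.sin v x t‖ := fun x => by
      rw [hSU, hSV, ← mul_sub, norm_mul, norm_neg, Real.norm_of_nonneg (by positivity)]; rfl
    refine (eLpNorm_le_mul_eLpNorm_of_ae_le_mul (Filter.Eventually.of_forall fun x =>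
      (hS x).le) p).trans ?_
    gcongr
    simpa using
      eLpNorm_waveDuhamel_sub_le Real.lipschitzWith_sin Real.abs_sin_le_one hu hv ht.1 hp hM
  refine ⟨iSup₂_le fun t ht => (hslice t ht).trans ?_, ?_⟩
  · rw [← mul_assoc, ← ENNReal.ofReal_mul (by positivity), one_div_mul_eq_div]
    gcongr
    exacts [ht.1, ht.2]
  · gcongr
    exact hT ▸ ofReal_min_one_sq_div_le_half ε

/-- Contraction estimate for the sine-Gordon Duhamel operator: with
`T = min{ε,1}` and `(𝒮U)(x,t) = -(1/(2ε²))∫₀ᵗ∫_{x-(t-t₀)}^{x+(t-t₀)}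
sin(U(x₀,t₀)+b(x₀)) dx₀ dt₀`, for all `U, V` of finite `X`-norm,
`‖𝒮U - 𝒮V‖_X ≤ (T²/(2ε²))‖U - V‖_X ≤ ½‖U - V‖_X`, where
`‖W‖_X = sup_{0≤t≤T} ‖W(·,t)‖_{Lᵖ}`. -/
theorem duhamel_operator_contraction (ε : ℝ) (hε : 0 < ε)
    (T : ℝ) (hT : T = min ε 1) (p : ENNReal) (hp : 1 ≤ p)
    (b : ℝ → ℝ) (hb : Measurable b)
    (U V : ℝ → ℝ → ℝ)
    (hUm : Measurable (Function.uncurry U))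
    (hVm : Measurable (Function.uncurry V))
    (hU : (⨆ t ∈ Set.Icc (0 : ℝ) T,
      eLpNorm (fun x => U x t) p (volume : Measure ℝ)) < ⊤)
    (hV : (⨆ t ∈ Set.Icc (0 : ℝ) T,
      eLpNorm (fun x => V x t) p (volume : Measure ℝ)) < ⊤)
    (SU SV : ℝ → ℝ → ℝ)
    (hSU : ∀ x t, SU x t = -(1 / (2 * ε ^ 2)) *
      ∫ t₀ in (0 : ℝ)..t, ∫ x₀ in (x - (t - t₀))..(x + (t - t₀)),
        Real.sin (U x₀ t₀ + b x₀))
    (hSV : ∀ x t, SV x t = -(1 / (2 * ε ^ 2)) *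
      ∫ t₀ in (0 : ℝ)..t, ∫ x₀ in (x - (t - t₀))..(x + (t - t₀)),
        Real.sin (V x₀ t₀ + b x₀)) :
    (⨆ t ∈ Set.Icc (0 : ℝ) T,
        eLpNorm (fun x => SU x t - SV x t) p (volume : Measure ℝ))
      ≤ ENNReal.ofReal (T ^ 2 / (2 * ε ^ 2)) *
          (⨆ t ∈ Set.Icc (0 : ℝ) T,
            eLpNorm (fun x => U x t - V x t) p (volume : Measure ℝ)) ∧
    ENNReal.ofReal (T ^ 2 / (2 * ε ^ 2)) *
        (⨆ t ∈ Set.Icc (0 : ℝ) T,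
          eLpNorm (fun x => U x t - V x t) p (volume : Measure ℝ))
      ≤ (1 / 2 : ENNReal) *
          (⨆ t ∈ Set.Icc (0 : ℝ) T,
            eLpNorm (fun x => U x t - V x t) p (volume : Measure ℝ)) :=
  duhamel_operator_contraction_general ε T hT p hp b hb U V hUm hVm SU SV hSU hSV
end
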